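/- Let d ≥ 2, b > a ≥ 1, 0 < l ≤ b, and suppose a + l > b. If the function f(x) = ((a x + l)/b)^d has a fixed point in [1,∞), then h(T_{M(a,b;l)}) = log b. -/

import Mathlib

open Filter Real

/-- `treeP d M n i` = number of `n`-blocks of the hom Markov tree-shift `T_M`
on the `d`-tree whose root label is `i`. -/
def treeP (d : ℕ) {ι : Type} [Fintype ι] (M : Matrix ι ι ℕ) : ℕ → ι → ℕ
  | 0, _ => 1
  | n + 1, i => (∑ j, M i j * treeP d M n j) ^ d

/-- `|Δ_n| = 1 + d + ⋯ + d^n`. -/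
def deltaCard (d n : ℕ) : ℕ := ∑ i ∈ Finset.range (n + 1), d ^ i

/-- Topological entropy of the hom Markov tree-shift `T_M` on the `d`-tree. -/
noncomputable def treeEntropy (d : ℕ) {ι : Type} [Fintype ι] (M : Matrix ι ι ℕ) : ℝ :=
  Filter.limsup (fun n => Real.log (∑ i, treeP d M n i) / (deltaCard d n : ℝ)) Filter.atTop

/-- `M` has entries in `{0,1}`. -/
def IsBinary {ι : Type} [Fintype ι] (M : Matrix ι ι ℕ) : Prop := ∀ i j, M i j ≤ 1

/-- `M` is irreducible. -/
def MatIrreducible {ι : Type} [Fintype ι] [DecidableEq ι] (M : Matrix ι ι ℕ) : Prop :=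
  ∀ i j, ∃ n, 1 ≤ n ∧ 0 < (M ^ n) i j

/-- `M` is the block matrix `[[E_a, R],[O, E_b]]` with `R` binary of constant row sum `l`. -/
def IsMabl (a b l : ℕ) (M : Matrix (Fin (a + b)) (Fin (a + b)) ℕ) : Prop :=
  (∀ i j, M i j ≤ 1) ∧
  (∀ i j : Fin (a + b), (i : ℕ) < a → (j : ℕ) < a → M i j = 1) ∧
  (∀ i j : Fin (a + b), a ≤ (i : ℕ) → a ≤ (j : ℕ) → M i j = 1) ∧
  (∀ i j : Fin (a + b), a ≤ (i : ℕ) → (j : ℕ) < a → M i j = 0) ∧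
  (∀ i : Fin (a + b), (i : ℕ) < a → (∑ j : Fin (a + b), if a ≤ (j : ℕ) then M i j else 0) = l)

/-!
Rooted at a label of the second diagonal block, which is all-ones and absorbing, an `n`-block
is a free labelling of `Δ_n` by `b` symbols with its root fixed: there are `b ^ |Δ_n| / b`
of them. Rooted at a label of the first block there are `y_n` times as many, where the ratio
evolves by `y ↦ ((a y + l) / b) ^ d` from `y_0 = 1`. This map is monotone on `[0, ∞)`, so its
fixed point `x ≥ 1` traps every `y_n` in `[0, x]`. The total number of `n`-blocks is thus
`b ^ |Δ_n|` up to a factor in `[1, (a x + b) / b]`, which the normalisation by `|Δ_n|` erases.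
-/

open Filter Topology

lemma deltaCard_succ (d n : ℕ) : deltaCard d (n + 1) = 1 + d * deltaCard d n := by
  rw [deltaCard, Finset.sum_range_succ', deltaCard, Finset.mul_sum]
  simp [pow_succ', add_comm]

lemma le_deltaCard {d : ℕ} (hd : 1 ≤ d) (n : ℕ) : n + 1 ≤ deltaCard d n :=
  calc n + 1 = ∑ _i ∈ Finset.range (n + 1), 1 := by simp
    _ ≤ deltaCard d n := Finset.sum_le_sum fun i _ => Nat.one_le_pow _ _ hd

lemma tendsto_deltaCard_atTop {d : ℕ} (hd : 1 ≤ d) : Tendsto (deltaCard d) atTop atTop :=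
  tendsto_atTop_mono (fun n => (Nat.le_succ n).trans (le_deltaCard hd n)) tendsto_id

lemma tendsto_log_mul_pow_div {β m C : ℝ} (hβ : 0 < β) (hm : 0 < m) {c : ℕ → ℝ}
    (hc : ∀ n, m ≤ c n ∧ c n ≤ C) {N : ℕ → ℕ} (hN : Tendsto N atTop atTop) :
    Tendsto (fun n => log (c n * β ^ N n) / N n) atTop (𝓝 (log β)) := by
  have hN' : Tendsto (fun n => (N n : ℝ)) atTop atTop := tendsto_natCast_atTop_atTop.comp hN
  have hsmall : Tendsto (fun n => log (c n) / N n) atTop (𝓝 0) :=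
    tendsto_of_tendsto_of_tendsto_of_le_of_le
      (tendsto_const_nhds.div_atTop hN') (tendsto_const_nhds.div_atTop hN')
      (fun n => div_le_div_of_nonneg_right (log_le_log hm (hc n).1) (Nat.cast_nonneg _))
      (fun n => div_le_div_of_nonneg_right (log_le_log (hm.trans_le (hc n).1) (hc n).2)
        (Nat.cast_nonneg _))
  have hsplit : ∀ᶠ n in atTop, log β + log (c n) / N n = log (c n * β ^ N n) / N n := by
    filter_upwards [hN.eventually_ne_atTop 0] with n hn
    rw [log_mul (hm.trans_le (hc n).1).ne' (pow_pos hβ _).ne', log_pow]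
    field_simp
    ring
  simpa using (tendsto_const_nhds.add hsmall).congr' hsplit

lemma treeEntropy_eq_log_of_sum_treeP_eq {ι : Type} [Fintype ι] {d : ℕ} (hd : 1 ≤ d)
    {M : Matrix ι ι ℕ} {β m C : ℝ} (hβ : 0 < β) (hm : 0 < m) {c : ℕ → ℝ}
    (hc : ∀ n, m ≤ c n ∧ c n ≤ C)
    (hsum : ∀ n, ∑ i, (treeP d M n i : ℝ) = c n * β ^ deltaCard d n) :
    treeEntropy d M = log β := by
  rw [treeEntropy, funext fun n => congrArg (log · / _) (hsum n)]
  exact (tendsto_log_mul_pow_div hβ hm hc (tendsto_deltaCard_atTop hd)).limsup_eq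

lemma Fin.sum_ite_val_lt {R : Type*} [AddCommMonoid R] (a b : ℕ) (y z : R) :
    ∑ j : Fin (a + b), (if (j : ℕ) < a then y else z) = a • y + b • z := by
  simp [Fin.sum_univ_add]

lemma IsMabl.sum_mul_ite {a b l : ℕ} {M : Matrix (Fin (a + b)) (Fin (a + b)) ℕ}
    (hM : IsMabl a b l M) (i : Fin (a + b)) (y z : ℝ) :
    ∑ j, (M i j : ℝ) * (if (j : ℕ) < a then y else z) =
      if (i : ℕ) < a then a * y + l * z else b * z := by
  obtain ⟨-, hUL, hLR, hLL, hrow⟩ := hM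
  split_ifs with hi
  · have hR : ∑ j : Fin b, (M i (Fin.natAdd a j) : ℝ) = l := by
      have hleft : ∀ j : Fin a, ¬a ≤ (j : ℕ) := fun j => not_le.2 j.is_lt
      exact_mod_cast (by simpa [Fin.sum_univ_add, hleft] using hrow i hi)
    simp [Fin.sum_univ_add, hUL i _ hi, ← Finset.sum_mul, hR]
  · simp [Fin.sum_univ_add, hLL i _ (not_lt.1 hi), hLR i _ (not_lt.1 hi)]

noncomputable def mablRatioMap (a b l d : ℕ) (y : ℝ) : ℝ := ((a * y + l) / b) ^ d

lemma IsMabl.treeP_eq {a b l d : ℕ} {M : Matrix (Fin (a + b)) (Fin (a + b)) ℕ}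
    (hM : IsMabl a b l M) (hb : (0 : ℝ) < b) (n : ℕ) (i : Fin (a + b)) :
    (treeP d M n i : ℝ) =
      (if (i : ℕ) < a then (mablRatioMap a b l d)^[n] 1 else 1) *
        ((b : ℝ) ^ deltaCard d n / b) := by
  induction n generalizing i with
  | zero => simp [treeP, deltaCard, hb.ne']
  | succ n ih =>
    rw [treeP]
    push_cast
    simp_rw [ih, ← mul_assoc, ← Finset.sum_mul, hM.sum_mul_ite, Function.iterate_succ_apply',
      deltaCard_succ, pow_add, pow_one, mul_div_cancel_left₀ _ hb.ne', pow_mul']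
    split_ifs
    · rw [mablRatioMap, ← mul_pow]
      congr 1
      field_simp
    · field_simp

lemma IsMabl.sum_treeP {a b l d : ℕ} {M : Matrix (Fin (a + b)) (Fin (a + b)) ℕ}
    (hM : IsMabl a b l M) (hb : (0 : ℝ) < b) (n : ℕ) :
    ∑ i, (treeP d M n i : ℝ) =
      (a * (mablRatioMap a b l d)^[n] 1 + b) / b * (b : ℝ) ^ deltaCard d n := by
  simp_rw [hM.treeP_eq hb, ← Finset.sum_mul, Fin.sum_ite_val_lt, nsmul_eq_mul, mul_one]
  ring

lemma mablRatioMap_monotoneOn (a b l d : ℕ) : MonotoneOn (mablRatioMap a b l d) (Set.Ici 0) :=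
  fun y (hy : 0 ≤ y) z _ hyz => by unfold mablRatioMap; gcongr

lemma mablRatioMap_iterate_mem_Icc {a b l d : ℕ} {x : ℝ} (hx : 1 ≤ x)
    (hfx : mablRatioMap a b l d x = x) (n : ℕ) :
    (mablRatioMap a b l d)^[n] 1 ∈ Set.Icc 0 x := by
  induction n with
  | zero => exact ⟨zero_le_one, hx⟩
  | succ n ih =>
    rw [Function.iterate_succ_apply']
    refine ⟨by unfold mablRatioMap; have := ih.1; positivity, ?_⟩
    exact hfx ▸ mablRatioMap_monotoneOn a b l d ih.1 (ih.1.trans ih.2) ih.2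

theorem treeEntropy_Mabl_eq_of_fixed_point_general {d a b l : ℕ} (hd : 2 ≤ d)
    (hab : a < b)
    (hfix : ∃ x : ℝ, 1 ≤ x ∧ (((a : ℝ) * x + l) / b) ^ d = x)
    (M : Matrix (Fin (a + b)) (Fin (a + b)) ℕ) (hM : IsMabl a b l M) :
    treeEntropy d M = Real.log b := by
  obtain ⟨x, hx, hfx⟩ := hfix
  have hb : (0 : ℝ) < b := by exact_mod_cast Nat.zero_lt_of_lt hab
  have hy := mablRatioMap_iterate_mem_Icc (a := a) (b := b) (l := l) (d := d) hx hfx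
  refine treeEntropy_eq_log_of_sum_treeP_eq (by omega) hb one_pos (C := (a * x + b) / b)
    (fun n => ⟨?_, ?_⟩) (hM.sum_treeP hb)
  · rw [le_div_iff₀ hb, one_mul, le_add_iff_nonneg_left]
    exact mul_nonneg (Nat.cast_nonneg a) (hy n).1
  · gcongr
    exact (hy n).2

/-- **Theorem 3.2 (b)(ii).** If `b > a ≥ 1`, `0 < l ≤ b`, `a + l > b` and
`f(x) = ((a x + l)/b)^d` has a fixed point in `[1,∞)`, then `h(T_{M(a,b;l)}) = log b`. -/
theorem treeEntropy_Mabl_eq_of_fixed_point {d a b l : ℕ} (hd : 2 ≤ d)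
    (ha : 1 ≤ a) (hab : a < b) (hl : 0 < l) (hlb : l ≤ b) (hsum : b < a + l)
    (hfix : ∃ x : ℝ, 1 ≤ x ∧ (((a : ℝ) * x + l) / b) ^ d = x)
    (M : Matrix (Fin (a + b)) (Fin (a + b)) ℕ) (hM : IsMabl a b l M) :
    treeEntropy d M = Real.log b :=
  treeEntropy_Mabl_eq_of_fixed_point_general hd hab hfix M hM
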